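/- arXiv:2506.15861 — 2 statements merged into one kernel-verified Lean document; each statement's English description precedes it below -/
import Mathlib

section
/- Let $0<\sigma<2^{-n}$, $r>0$, and define $\Psi:\mathbb{R}^n\to\mathbb{R}^n$ by $\Psi(x)=[1-\sigma(2^n-1)]x$ if $|x|<r/2$, $\Psi(x)=x+\sigma(1-r^n/|x|^n)x$ if $r/2\le|x|<r$, and $\Psi(x)=x$ if $|x|\ge r$. Then $\Psi$ is a bijection of $\mathbb{R}^n$ onto itself mapping the ball $B_r(0)$ onto itself. -/
open MeasureTheory Metric Set

noncomputable def gA (n : ℕ) (σ r t : ℝ) : ℝ :=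
  if t < r/2 then 1 - σ * ((2:ℝ)^n - 1) else if t < r then 1 + σ * (1 - r^n / t^n) else 1

noncomputable def fA (n : ℕ) (σ r t : ℝ) : ℝ := gA n σ r t * t

section aux

variable {n : ℕ} {σ r : ℝ} (hn : 1 ≤ n) (hσ : 0 < σ) (hσ' : σ < ((2:ℝ)^n)⁻¹) (hr : 0 < r)

include hn in
lemma two_le_pow : (2:ℝ) ≤ 2^n := by
  calc (2:ℝ) = 2^1 := (pow_one 2).symm
  _ ≤ 2^n := pow_le_pow_right₀ one_le_two hn

include hn hσ in
lemma pow_sub_one_nonneg : (0:ℝ) ≤ σ * ((2:ℝ)^n - 1) := by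
  have := two_le_pow hn
  nlinarith

include hn hσ hσ' in
lemma a_pos : 0 < 1 - σ * ((2:ℝ)^n - 1) := by
  have h2 : (2:ℝ) ≤ 2^n := two_le_pow hn
  have hp : (0:ℝ) < 2^n := by positivity
  have h1 : σ * 2^n < 1 := by
    have := mul_lt_mul_of_pos_right hσ' hp
    rwa [inv_mul_cancel₀ hp.ne'] at this
  nlinarith

include hr in
lemma pow_ratio : r^n / (r/2)^n = 2^n := by
  rw [div_pow, div_div_eq_mul_div, mul_comm, mul_div_assoc,
    div_self (pow_ne_zero n hr.ne'), mul_one]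

include hσ hr in
lemma mid_ge_a {t : ℝ} (ht : r/2 ≤ t) :
    1 - σ * ((2:ℝ)^n - 1) ≤ 1 + σ * (1 - r^n / t^n) := by
  have ht0 : 0 < t := lt_of_lt_of_le (by linarith) ht
  have h1 : (r/2)^n ≤ t^n := pow_le_pow_left₀ (by positivity) ht n
  have h2 : r^n / t^n ≤ r^n / (r/2)^n :=
    div_le_div_of_nonneg_left (by positivity) (by positivity) h1
  rw [pow_ratio hr] at h2
  nlinarith [mul_le_mul_of_nonneg_left h2 hσ.le]

include hn hσ hr in
lemma mid_lt_one {t : ℝ} (ht : r/2 ≤ t) (ht' : t < r) :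
    1 + σ * (1 - r^n / t^n) < 1 := by
  have ht0 : 0 < t := lt_of_lt_of_le (by linarith) ht
  have h1 : t^n < r^n := pow_lt_pow_left₀ ht' ht0.le (by omega)
  have h2 : 1 < r^n / t^n := (one_lt_div (by positivity)).mpr h1
  nlinarith

include hn hσ hσ' hr in
lemma gA_pos (t : ℝ) : 0 < gA n σ r t := by
  unfold gA
  split_ifs with h1 h2
  · exact a_pos hn hσ hσ'
  · exact lt_of_lt_of_le (a_pos hn hσ hσ') (mid_ge_a hσ hr (le_of_not_gt h1))
  · norm_num

include hσ hr in
lemma m_mono {s t : ℝ} (hs : r/2 ≤ s) (hst : s < t) :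
    s + σ * (1 - r^n / s^n) * s < t + σ * (1 - r^n / t^n) * t := by
  have hs0 : 0 < s := lt_of_lt_of_le (by linarith) hs
  have ht0 : 0 < t := hs0.trans hst
  rcases Nat.eq_zero_or_pos n with h0 | h0
  · subst h0; simp only [pow_zero]
    nlinarith
  obtain ⟨m, rfl⟩ : ∃ m, n = m + 1 := ⟨n - 1, by omega⟩
  have hkey : t * s^(m+1) ≤ s * t^(m+1) := by
    have h1 : s^m ≤ t^m := pow_le_pow_left₀ hs0.le hst.le m
    calc t * s^(m+1) = (s*t) * s^m := by ring
    _ ≤ (s*t) * t^m := mul_le_mul_of_nonneg_left h1 (by positivity)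
    _ = s * t^(m+1) := by ring
  have hdiv : t / t^(m+1) ≤ s / s^(m+1) := by
    rw [div_le_div_iff₀ (by positivity) (by positivity)]
    exact hkey
  have e : ∀ u : ℝ, 0 < u → u + σ * (1 - r^(m+1) / u^(m+1)) * u
      = (1+σ)*u - σ*r^(m+1)*(u/u^(m+1)) := by
    intro u hu
    field_simp
    ring
  rw [e s hs0, e t ht0]
  have h2 : σ*r^(m+1)*(t/t^(m+1)) ≤ σ*r^(m+1)*(s/s^(m+1)) :=
    mul_le_mul_of_nonneg_left hdiv (by positivity)
  nlinarith

include hn hσ hr in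
lemma m_lt_self {t : ℝ} (ht : r/2 ≤ t) (ht' : t < r) :
    t + σ * (1 - r^n / t^n) * t < t := by
  have ht0 : 0 < t := lt_of_lt_of_le (by linarith) ht
  have h1 : t^n < r^n := pow_lt_pow_left₀ ht' ht0.le (by omega)
  have h2 : 1 < r^n / t^n := (one_lt_div (by positivity)).mpr h1
  nlinarith [mul_pos (mul_pos hσ ht0) (sub_pos.mpr h2)]

include hn hσ hσ' hr in
lemma fA_mono {s t : ℝ} (hs : 0 ≤ s) (hst : s < t) : fA n σ r s < fA n σ r t := by
  have ha := a_pos hn hσ hσ'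
  have ha1 : 1 - σ*((2:ℝ)^n-1) ≤ 1 := by nlinarith [pow_sub_one_nonneg hn hσ]
  unfold fA gA
  by_cases hs1 : s < r/2
  · rw [if_pos hs1]
    by_cases ht1 : t < r/2
    · rw [if_pos ht1]
      exact mul_lt_mul_of_pos_left hst ha
    · rw [if_neg ht1]
      have hast : (1 - σ*((2:ℝ)^n-1)) * s < (1 - σ*((2:ℝ)^n-1)) * t :=
        mul_lt_mul_of_pos_left hst ha
      by_cases ht2 : t < r
      · rw [if_pos ht2]
        have h3 := mid_ge_a hσ hr (le_of_not_gt ht1) (n := n)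
        nlinarith [mul_le_mul_of_nonneg_right h3 (le_trans hs hst.le)]
      · rw [if_neg ht2]
        have h4 := mul_le_mul_of_nonneg_right ha1 hs
        have := le_of_not_gt ht2
        nlinarith
  · have ht1 : ¬ t < r/2 := fun h => hs1 (hst.trans h)
    rw [if_neg hs1, if_neg ht1]
    have hs0 : 0 < s := lt_of_lt_of_le (half_pos hr) (le_of_not_gt hs1)
    by_cases hs2 : s < r
    · rw [if_pos hs2]
      by_cases ht2 : t < r
      · rw [if_pos ht2]
        have := m_mono hσ hr (le_of_not_gt hs1) hst (n := n)
        nlinarith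
      · rw [if_neg ht2]
        have h1 := m_lt_self hn hσ hr (le_of_not_gt hs1) hs2
        have := le_of_not_gt ht2
        nlinarith
    · have ht2 : ¬ t < r := fun h => hs2 (hst.trans h)
      rw [if_neg hs2, if_neg ht2]
      linarith [one_mul s, one_mul t]

include hn hσ hσ' hr in
lemma fA_lt_r {t : ℝ} (ht : 0 ≤ t) (ht' : t < r) : fA n σ r t < r := by
  have ha1 : 1 - σ*((2:ℝ)^n-1) ≤ 1 := by nlinarith [pow_sub_one_nonneg hn hσ]
  unfold fA gA
  by_cases h1 : t < r/2
  · rw [if_pos h1]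
    nlinarith [mul_le_mul_of_nonneg_right ha1 ht]
  · rw [if_neg h1, if_pos ht']
    have := m_lt_self hn hσ hr (le_of_not_gt h1) ht'
    nlinarith

lemma fA_eq_self {t : ℝ} (hrt : r ≤ t) (hr0 : 0 < r) : fA n σ r t = t := by
  unfold fA gA
  rw [if_neg (not_lt.mpr (le_trans (by linarith) hrt)), if_neg (not_lt.mpr hrt), one_mul]

include hn hσ hσ' hr in
lemma exists_preimage (s : ℝ) (hs : 0 ≤ s) :
    ∃ t, 0 ≤ t ∧ fA n σ r t = s ∧ (s < r → t < r) := by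
  have ha := a_pos hn hσ hσ'
  by_cases hsr : r ≤ s
  · exact ⟨s, hs, fA_eq_self hsr hr, fun h => absurd hsr (not_le.mpr h)⟩
  push_neg at hsr
  set a := 1 - σ * ((2:ℝ)^n - 1) with hadef
  by_cases hsa : s < a * (r/2)
  · refine ⟨s/a, by positivity, ?_, fun _ => ?_⟩
    · have h1 : s/a < r/2 := by rw [div_lt_iff₀ ha]; linarith [mul_comm a (r/2)]
      unfold fA gA
      rw [if_pos h1, ← hadef, mul_div_cancel₀ _ ha.ne']
    · have h1 : s/a < r/2 := by rw [div_lt_iff₀ ha]; linarith [mul_comm a (r/2)]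
      linarith
  · push_neg at hsa
    set m : ℝ → ℝ := fun t => t + σ * (1 - r^n / t^n) * t with hmdef
    have hcont : ContinuousOn m (Icc (r/2) r) := by
      apply ContinuousOn.add continuousOn_id
      apply ContinuousOn.mul _ continuousOn_id
      apply ContinuousOn.mul continuousOn_const
      apply ContinuousOn.sub continuousOn_const
      apply ContinuousOn.div continuousOn_const (continuous_pow n).continuousOn
      intro x hx
      exact pow_ne_zero n (ne_of_gt (lt_of_lt_of_le (half_pos hr) hx.1))
    have hm2 : m (r/2) = a * (r/2) := by
      simp only [hmdef]
      rw [pow_ratio hr (n := n)]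
      ring
    have hmr : m r = r := by
      simp only [hmdef]
      rw [div_self (pow_ne_zero n hr.ne')]
      ring
    have hivt := intermediate_value_Icc (by linarith : r/2 ≤ r) hcont
    have hmem : s ∈ Icc (m (r/2)) (m r) := by
      rw [hm2, hmr]; exact ⟨hsa, hsr.le⟩
    obtain ⟨t, htmem, hmt⟩ := hivt hmem
    have ht2 : r/2 ≤ t := htmem.1
    have htr : t < r := by
      rcases lt_or_eq_of_le htmem.2 with h | h
      · exact h
      · rw [h, hmr] at hmt; exact absurd hmt.symm (ne_of_lt hsr)
    refine ⟨t, by linarith, ?_, fun _ => htr⟩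
    unfold fA gA
    rw [if_neg (not_lt.mpr ht2), if_pos htr]
    rw [← hmt]; simp only [hmdef]; ring

end aux

/-- The radial perturbation map Ψ is a bijection of ℝⁿ mapping B_r(0) onto itself. -/
theorem stmt1 (n : ℕ) (hn : 1 ≤ n) (σ r : ℝ) (hσ : 0 < σ) (hσ' : σ < ((2:ℝ)^n)⁻¹)
    (hr : 0 < r)
    (Ψ : EuclideanSpace ℝ (Fin n) → EuclideanSpace ℝ (Fin n))
    (hΨ : Ψ = fun x =>
      if ‖x‖ < r / 2 then (1 - σ * ((2:ℝ)^n - 1)) • x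
      else if ‖x‖ < r then x + (σ * (1 - r^n / ‖x‖^n)) • x
      else x) :
    Function.Bijective Ψ ∧ Ψ '' ball (0 : EuclideanSpace ℝ (Fin n)) r = ball 0 r := by
  have hΨg : ∀ x, Ψ x = gA n σ r ‖x‖ • x := by
    intro x
    rw [hΨ]
    simp only [gA]
    split_ifs with h1 h2
    · rfl
    · rw [add_smul, one_smul]
    · rw [one_smul]
  have hnorm : ∀ x, ‖Ψ x‖ = fA n σ r ‖x‖ := by
    intro x
    rw [hΨg, norm_smul, Real.norm_eq_abs, abs_of_pos (gA_pos hn hσ hσ' hr _)]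
    rfl
  -- key construction: preimage of any point
  have key : ∀ y : EuclideanSpace ℝ (Fin n), ∃ x, Ψ x = y ∧ (‖y‖ < r → ‖x‖ < r) := by
    intro y
    by_cases hy : y = 0
    · refine ⟨0, ?_, fun _ => by simp [hr]⟩
      rw [hΨg, smul_zero, hy]
    · have hs : 0 < ‖y‖ := norm_pos_iff.mpr hy
      obtain ⟨t, ht0, htf, htlt⟩ := exists_preimage hn hσ hσ' hr ‖y‖ (norm_nonneg y)
      refine ⟨(t/‖y‖) • y, ?_, fun h => ?_⟩
      · have hxnorm : ‖(t/‖y‖) • y‖ = t := by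
          rw [norm_smul, Real.norm_eq_abs, abs_of_nonneg (div_nonneg ht0 hs.le),
            div_mul_cancel₀ _ hs.ne']
        rw [hΨg, hxnorm, smul_smul]
        have h2 : gA n σ r t * (t / ‖y‖) = 1 := by
          rw [mul_div_assoc']
          have : gA n σ r t * t = ‖y‖ := htf
          rw [this, div_self hs.ne']
        rw [h2, one_smul]
      · have hxnorm : ‖(t/‖y‖) • y‖ = t := by
          rw [norm_smul, Real.norm_eq_abs, abs_of_nonneg (div_nonneg ht0 hs.le),
            div_mul_cancel₀ _ hs.ne']
        rw [hxnorm]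
        exact htlt h
  have hinj : Function.Injective Ψ := by
    intro x y hxy
    have h1 : fA n σ r ‖x‖ = fA n σ r ‖y‖ := by rw [← hnorm, ← hnorm, hxy]
    have h2 : ‖x‖ = ‖y‖ := by
      rcases lt_trichotomy ‖x‖ ‖y‖ with h | h | h
      · exact absurd h1 (ne_of_lt (fA_mono hn hσ hσ' hr (norm_nonneg x) h))
      · exact h
      · exact absurd h1.symm (ne_of_lt (fA_mono hn hσ hσ' hr (norm_nonneg y) h))
    have h3 : gA n σ r ‖x‖ • x = gA n σ r ‖x‖ • y := by
      have := hxy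
      rw [hΨg x, hΨg y, ← h2] at this
      exact this
    exact smul_right_injective _ (gA_pos hn hσ hσ' hr ‖x‖).ne' h3
  refine ⟨⟨hinj, fun y => ?_⟩, ?_⟩
  · obtain ⟨x, hx, -⟩ := key y
    exact ⟨x, hx⟩
  · apply Subset.antisymm
    · rintro _ ⟨x, hx, rfl⟩
      rw [mem_ball_zero_iff] at hx ⊢
      rw [hnorm]
      exact fA_lt_r hn hσ hσ' hr (norm_nonneg x) hx
    · intro y hy
      rw [mem_ball_zero_iff] at hy
      obtain ⟨x, hx, hlt⟩ := key y
      exact ⟨x, mem_ball_zero_iff.mpr (hlt hy), hx⟩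
end

section
/- Let $C_3>0$, $\tau\in(0,1)$ with $2C_3\tau^{1/2}<1$, $\varepsilon>0$, and let $f:(0,r]\to[0,\infty)$ and $\Lambda, r>0$ with $\Lambda r\le\varepsilon$ satisfy: $f(\sigma r)\le\varepsilon(\sigma r)^{n-1}$ for a given $\sigma\in(0,1)$, and the decay property $f(\tau\rho)\le C_3\tau^n(f(\rho)+\Lambda\rho^n)$ holds whenever $f(\rho)\le\varepsilon\rho^{n-1}$ and $\rho\le\sigma r$. Then for all integers $h\ge0$, $f(\sigma\tau^h r)\le\varepsilon\,\tau^{h/2}(\sigma\tau^h r)^{n-1}$; in particular $\lim_{h\to\infty}f(\sigma\tau^h r)/(\sigma\tau^h r)^{n-1}=0$. -/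
open Filter
open scoped Topology

/-- Abstract iteration lemma for the density lower bound: geometric decay of the
localized energy along the radii στʰr. -/
theorem stmt10 (n : ℕ) (hn : 1 ≤ n) (C₃ τ ε Λ r σ : ℝ)
    (hC₃ : 0 < C₃) (hτ : 0 < τ) (hτ1 : τ < 1) (hτC : 2 * C₃ * Real.sqrt τ < 1)
    (hε : 0 < ε) (hΛ : 0 < Λ) (hr : 0 < r) (hΛr : Λ * r ≤ ε)
    (hσ : 0 < σ) (hσ1 : σ < 1)
    (f : ℝ → ℝ) (hf0 : ∀ ρ, 0 ≤ f ρ)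
    (hinit : f (σ * r) ≤ ε * (σ * r)^(n-1))
    (hdecay : ∀ ρ, 0 < ρ → ρ ≤ σ * r → f ρ ≤ ε * ρ^(n-1) →
      f (τ * ρ) ≤ C₃ * τ^n * (f ρ + Λ * ρ^n)) :
    (∀ h : ℕ, f (σ * τ^h * r) ≤ ε * τ ^ ((h : ℝ)/2) * (σ * τ^h * r)^(n-1)) ∧
    Tendsto (fun h : ℕ => f (σ * τ^h * r) / (σ * τ^h * r)^(n-1)) atTop (𝓝 0) := by
  set s := Real.sqrt τ with hs
  have hs0 : 0 < s := Real.sqrt_pos.mpr hτ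
  have hs1 : s < 1 := by
    rw [hs, show (1:ℝ) = Real.sqrt 1 by simp]
    exact Real.sqrt_lt_sqrt hτ.le hτ1
  have hss : s * s = τ := Real.mul_self_sqrt hτ.le
  have hτs : τ ≤ s := by nlinarith
  -- key induction
  have key : ∀ h : ℕ, f (σ * τ^h * r) ≤ ε * s^h * (σ * τ^h * r)^(n-1) := by
    intro h
    induction h with
    | zero => simpa using hinit
    | succ h ih =>
      set ρ := σ * τ^h * r with hρ
      clear_value ρ
      have hρpos : 0 < ρ := by rw [hρ]; positivity
      have hτh1 : τ^h ≤ 1 := pow_le_one₀ hτ.le hτ1.le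
      have hρle : ρ ≤ σ * r := by
        rw [hρ, mul_comm σ (τ^h), mul_assoc]
        nlinarith [mul_pos hσ hr]
      have hsh1 : s^h ≤ 1 := pow_le_one₀ hs0.le hs1.le
      have hfρ : f ρ ≤ ε * ρ^(n-1) := by
        refine ih.trans ?_
        have : ε * s^h ≤ ε * 1 := by nlinarith
        nlinarith [pow_nonneg hρpos.le (n-1)]
      have hd := hdecay ρ hρpos hρle hfρ
      -- bound Λ ρ^n
      have hρn : ρ^n = ρ * ρ^(n-1) := by
        conv_lhs => rw [show n = 1 + (n-1) by omega]
        rw [pow_add, pow_one]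
      have hΛρ : Λ * ρ ≤ ε * s^h := by
        have h1 : Λ * ρ = (Λ * r) * (σ * τ^h) := by rw [hρ]; ring
        have h2 : σ * τ^h ≤ s^h := by
          have : τ^h ≤ s^h := pow_le_pow_left₀ hτ.le hτs h
          nlinarith [pow_pos hτ h]
        calc Λ * ρ = (Λ * r) * (σ * τ^h) := h1
          _ ≤ ε * s^h := by nlinarith [mul_pos hσ (pow_pos hτ h)]
      have hΛρn : Λ * ρ^n ≤ ε * s^h * ρ^(n-1) := by
        rw [hρn, ← mul_assoc]
        exact mul_le_mul_of_nonneg_right hΛρ (pow_nonneg hρpos.le _)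
      have hsum : f ρ + Λ * ρ^n ≤ 2 * (ε * s^h * ρ^(n-1)) := by linarith
      have hτn : τ^n = τ * τ^(n-1) := by
        conv_lhs => rw [show n = 1 + (n-1) by omega]
        rw [pow_add, pow_one]
      have hstep : C₃ * τ^n * (f ρ + Λ * ρ^n) ≤ ε * s^(h+1) * (τ * ρ)^(n-1) := by
        calc C₃ * τ^n * (f ρ + Λ * ρ^n)
            ≤ C₃ * τ^n * (2 * (ε * s^h * ρ^(n-1))) := by
              refine mul_le_mul_of_nonneg_left hsum ?_
              positivity
          _ = (2 * C₃ * s) * (ε * s^(h+1) * (τ * ρ)^(n-1)) := by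
              rw [hτn, mul_pow, pow_succ, ← hss]; ring
          _ ≤ 1 * (ε * s^(h+1) * (τ * ρ)^(n-1)) := by
              refine mul_le_mul_of_nonneg_right hτC.le ?_
              have := mul_pos hτ hρpos
              positivity
          _ = ε * s^(h+1) * (τ * ρ)^(n-1) := one_mul _
      have heq : τ * ρ = σ * τ^(h+1) * r := by rw [hρ, pow_succ]; ring
      calc f (σ * τ^(h+1) * r) = f (τ * ρ) := by rw [heq]
        _ ≤ C₃ * τ^n * (f ρ + Λ * ρ^n) := hd
        _ ≤ ε * s^(h+1) * (τ * ρ)^(n-1) := hstep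
        _ = ε * s^(h+1) * (σ * τ^(h+1) * r)^(n-1) := by rw [heq]
  have hrpow : ∀ h : ℕ, τ ^ ((h : ℝ)/2) = s^h := by
    intro h
    rw [hs, show ((h:ℝ)/2) = ((1:ℝ)/2) * (h:ℝ) by ring, Real.rpow_mul hτ.le,
      ← Real.sqrt_eq_rpow, Real.rpow_natCast]
  constructor
  · intro h; rw [hrpow h]; exact key h
  · have hub : ∀ h : ℕ, f (σ * τ^h * r) / (σ * τ^h * r)^(n-1) ≤ ε * s^h := by
      intro h
      have hρpos : (0:ℝ) < σ * τ^h * r := by positivity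
      have hpw : (0:ℝ) < (σ * τ^h * r)^(n-1) := pow_pos hρpos _
      rw [div_le_iff₀ hpw]
      exact key h
    have hlb : ∀ h : ℕ, 0 ≤ f (σ * τ^h * r) / (σ * τ^h * r)^(n-1) := by
      intro h
      have hρpos : (0:ℝ) < σ * τ^h * r := by positivity
      exact div_nonneg (hf0 _) (pow_pos hρpos _).le
    have htend : Tendsto (fun h : ℕ => ε * s^h) atTop (𝓝 0) := by
      have := tendsto_pow_atTop_nhds_zero_of_lt_one hs0.le hs1
      simpa using this.const_mul ε
    exact squeeze_zero hlb hub htend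
end
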